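/- With $D = \frac{e^{1-\gamma/2}}{\sqrt{2}}$ and $R_n$ defined via the blocks $B_k$, for every $n \ge 2$ one has $R_{n+1} - R_n < \frac{0.87}{n^{0.473678}}$. -/

import Mathlib

/-!
On the block `2 ^ k < n ≤ 2 ^ (k + 1)` the sequence `Rseq D` is affine with slope
`√2 (D ^ (k + 1) - D ^ k) / 2 ^ k = 2√2 (1 - 1/D) (D/2) ^ (k + 1)`, and for `1 ≤ D ≤ 2` we have
`(D/2) ^ (k + 1) ≤ n ^ log₂ (D/2)`. For `D = e^(1 - γ/2) / √2` the constant is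
`2√2 - 4 e^(γ/2 - 1) < 0.87` and the exponent is `(1 - γ/2) / log 2 - 3/2 ≤ -0.473678`. The latter
needs `γ > 0.57721562`, which follows from `H₂₅₅ - log 256 + 1/512 + 1/786432 - 1/33554432 ≤ γ`.
-/

open Real

noncomputable def Rseq (D : ℝ) (n : ℕ) : ℝ :=
  if n ≤ 1 then 1
  else Real.sqrt 2 * (D ^ (Nat.clog 2 n - 1) +
    ((n : ℝ) - 2 ^ (Nat.clog 2 n - 1) - 1) *
      (D ^ Nat.clog 2 n - D ^ (Nat.clog 2 n - 1)) / 2 ^ (Nat.clog 2 n - 1))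

open Filter Topology

theorem Nat.clog_eq_succ_of_pow_lt_of_le {b k n : ℕ} (hb : 1 < b) (hlt : b ^ k < n)
    (hle : n ≤ b ^ (k + 1)) : Nat.clog b n = k + 1 :=
  le_antisymm (Nat.clog_le_of_le_pow hle) ((Nat.lt_clog_iff_pow_lt hb).2 hlt)

theorem Nat.exists_two_pow_lt_and_le_two_pow_succ {n : ℕ} (hn : 2 ≤ n) :
    ∃ k, 2 ^ k < n ∧ n ≤ 2 ^ (k + 1) := by
  refine ⟨Nat.clog 2 n - 1, Nat.pow_pred_clog_lt_self one_lt_two hn, ?_⟩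
  rw [Nat.sub_add_cancel (Nat.clog_pos one_lt_two hn)]
  exact Nat.le_pow_clog one_lt_two n

theorem Rseq_of_pow_lt_of_le (D : ℝ) {k n : ℕ} (hlt : 2 ^ k < n) (hle : n ≤ 2 ^ (k + 1)) :
    Rseq D n = √2 * (D ^ k + ((n : ℝ) - 2 ^ k - 1) * (D ^ (k + 1) - D ^ k) / 2 ^ k) := by
  have hn : ¬ n ≤ 1 := by have := Nat.one_le_two_pow (n := k); omega
  rw [Rseq, if_neg hn, Nat.clog_eq_succ_of_pow_lt_of_le one_lt_two hlt hle, Nat.add_sub_cancel]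

/-- At `n = 2 ^ (k + 1)` the next block starts at `√2 * D ^ (k + 1)`, which continues the line of
block `k`. -/
theorem Rseq_succ_sub_of_pow_lt_of_le (D : ℝ) {k n : ℕ} (hlt : 2 ^ k < n)
    (hle : n ≤ 2 ^ (k + 1)) :
    Rseq D (n + 1) - Rseq D n = √2 * (D ^ (k + 1) - D ^ k) / 2 ^ k := by
  rw [Rseq_of_pow_lt_of_le D hlt hle]
  rcases hle.lt_or_eq with hlt' | rfl
  · rw [Rseq_of_pow_lt_of_le D (by omega) hlt']
    push_cast
    field_simp
    ring
  · rw [Rseq_of_pow_lt_of_le D (k := k + 1) (by omega) (by rw [pow_succ _ (k + 1)]; omega)]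
    push_cast
    field_simp
    ring

theorem Rseq_succ_sub_le_rpow {D : ℝ} (hD₁ : 1 ≤ D) (hD₂ : D ≤ 2) {n : ℕ} (hn : 2 ≤ n) :
    Rseq D (n + 1) - Rseq D n ≤ 2 * √2 * (1 - 1 / D) * (n : ℝ) ^ logb 2 (D / 2) := by
  obtain ⟨k, hlt, hle⟩ := Nat.exists_two_pow_lt_and_le_two_pow_succ hn
  have hD : 0 < D := by linarith
  have hpow : (D / 2) ^ (k + 1) ≤ (n : ℝ) ^ logb 2 (D / 2) := by
    calc (D / 2) ^ (k + 1) = ((2 : ℝ) ^ (k + 1)) ^ logb 2 (D / 2) := by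
          rw [← rpow_natCast, ← rpow_natCast, ← rpow_mul zero_le_two, mul_comm,
            rpow_mul zero_le_two, rpow_logb zero_lt_two (by norm_num) (by positivity)]
      _ ≤ (n : ℝ) ^ logb 2 (D / 2) := by
          refine rpow_le_rpow_of_nonpos (by positivity) (by exact_mod_cast hle) ?_
          exact logb_nonpos one_lt_two (by positivity) (by linarith)
  calc Rseq D (n + 1) - Rseq D n = 2 * √2 * (1 - 1 / D) * (D / 2) ^ (k + 1) := by
        rw [Rseq_succ_sub_of_pow_lt_of_le D hlt hle, div_pow]
        field_simp
        ring
    _ ≤ _ := by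
        have hK : 0 ≤ 1 - 1 / D := by rwa [sub_nonneg, div_le_one hD]
        exact mul_le_mul_of_nonneg_left hpow (mul_nonneg (by positivity) hK)

/-- The Euler–Maclaurin terms `1 / (2x) + 1 / (12x²)` of `γ - eulerMascheroniSeq (x - 1)`,
lowered by `1 / (2x³)` so that `eulerMascheroniSeq N + eulerMascheroniCorrection (N + 1)` increases to `γ`. -/
noncomputable def eulerMascheroniCorrection (x : ℝ) : ℝ :=
  1 / (2 * x) + 1 / (12 * x ^ 2) - 1 / (2 * x ^ 3)

theorem log_one_add_le_of_lt_one {t : ℝ} (ht₀ : 0 ≤ t) (ht₁ : t < 1) :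
    log (1 + t) ≤ t - t ^ 2 / 2 + t ^ 3 / 3 + t ^ 4 / (1 - t) := by
  have h := abs_log_sub_add_sum_range_le (x := -t) (by rwa [abs_neg, abs_of_nonneg ht₀]) 3
  rw [abs_neg, abs_of_nonneg ht₀, sub_neg_eq_add] at h
  have := (abs_le.1 h).2
  simp only [Finset.sum_range_succ, Finset.sum_range_zero] at this
  norm_num at this
  linarith

theorem eulerMascheroniCorrection_sub_succ_le {x : ℝ} (hx : 15 ≤ x) :
    eulerMascheroniCorrection x - eulerMascheroniCorrection (x + 1) ≤ 1 / x - log (1 + 1 / x) := by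
  have hx₀ : 0 < x := by linarith
  have hlog := log_one_add_le_of_lt_one (t := 1 / x) (by positivity)
    (by rw [div_lt_one hx₀]; linarith)
  have hnum : 0 ≤ 3 * x ^ 3 - 40 * x ^ 2 - 45 * x - 14 := by nlinarith [sq_nonneg (x - 15)]
  have hgap : 1 / x - (1 / x - (1 / x) ^ 2 / 2 + (1 / x) ^ 3 / 3 + (1 / x) ^ 4 / (1 - 1 / x))
      - (eulerMascheroniCorrection x - eulerMascheroniCorrection (x + 1))
      = (3 * x ^ 3 - 40 * x ^ 2 - 45 * x - 14) / (12 * x ^ 3 * (x + 1) ^ 3 * (x - 1)) := by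
    have : x - 1 ≠ 0 := by linarith
    unfold eulerMascheroniCorrection
    field_simp
    ring
  have : 0 ≤ (3 * x ^ 3 - 40 * x ^ 2 - 45 * x - 14) / (12 * x ^ 3 * (x + 1) ^ 3 * (x - 1)) :=
    div_nonneg hnum (mul_nonneg (by positivity) (by linarith))
  linarith

theorem eulerMascheroniSeq_add_correction_le_succ {N : ℕ} (hN : 14 ≤ N) :
    eulerMascheroniSeq N + eulerMascheroniCorrection (N + 1) ≤
      eulerMascheroniSeq (N + 1) + eulerMascheroniCorrection ((N + 1 : ℕ) + 1) := by
  have hx : (15 : ℝ) ≤ N + 1 := by norm_cast; omega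
  have hstep := eulerMascheroniCorrection_sub_succ_le hx
  have hlog : log (1 + 1 / ((N : ℝ) + 1)) = log ((N + 1 : ℕ) + 1) - log ((N : ℝ) + 1) := by
    rw [← log_div (by positivity) (by positivity)]
    congr 1
    field_simp
    push_cast
    ring
  rw [hlog, one_div] at hstep
  simp only [eulerMascheroniSeq, harmonic_succ]
  push_cast at hstep ⊢
  linarith

theorem eulerMascheroniSeq_add_correction_le {N : ℕ} (hN : 14 ≤ N) :
    eulerMascheroniSeq N + eulerMascheroniCorrection (N + 1) ≤ eulerMascheroniConstant := by
  have hc : Tendsto (fun M : ℕ ↦ eulerMascheroniCorrection (M + 1)) atTop (𝓝 0) := by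
    have h := tendsto_one_div_add_atTop_nhds_zero_nat (𝕜 := ℝ)
    have := ((h.div_const 2).add ((h.pow 2).div_const 12)).sub ((h.pow 3).div_const 2)
    norm_num at this
    convert this using 2 with M
    unfold eulerMascheroniCorrection
    field_simp
  refine ge_of_tendsto (by simpa using tendsto_eulerMascheroniSeq.add hc) ?_
  filter_upwards [eventually_ge_atTop N] with M hM
  induction M, hM using Nat.le_induction with
  | base => exact le_rfl
  | succ M hNM ih => exact ih.trans (eulerMascheroniSeq_add_correction_le_succ (hN.trans hNM))

theorem eulerMascheroniConstant_gt_d8 : (0.57721562 : ℝ) < eulerMascheroniConstant := by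
  have h := eulerMascheroniSeq_add_correction_le (N := 255) (by norm_num)
  have hH : (0.57721562 : ℚ) + 8 * 0.6931471808 - (1 / 512 + 1 / 786432 - 1 / 33554432) <
      harmonic 255 := by
    norm_num [harmonic, Finset.sum_range_succ]
  have hH' := (Rat.cast_lt (K := ℝ)).2 hH
  push_cast at hH'
  -- `N = 255` makes `log (N + 1) = 8 * log 2`.
  have h256 : ((255 : ℕ) : ℝ) + 1 = 2 ^ 8 := by norm_num
  have hc : eulerMascheroniCorrection (2 ^ 8) = 1 / 512 + 1 / 786432 - 1 / 33554432 := by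
    norm_num [eulerMascheroniCorrection]
  rw [eulerMascheroniSeq, h256, hc, log_pow] at h
  push_cast at h
  linarith [log_two_lt_d9]

theorem sqrt_two_le_exp_one_sub_eulerMascheroniConstant_div_two :
    √2 ≤ exp (1 - eulerMascheroniConstant / 2) := by
  have hsqrt : √2 < 3 / 2 := (sqrt_lt' (by norm_num)).2 (by norm_num)
  linarith [add_one_le_exp (1 - eulerMascheroniConstant / 2), eulerMascheroniConstant_lt_two_thirds]

theorem exp_one_sub_eulerMascheroniConstant_div_two_lt :
    exp (1 - eulerMascheroniConstant / 2) < 2.0424 := by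
  have hy : 0.28860781 < eulerMascheroniConstant / 2 := by linarith [eulerMascheroniConstant_gt_d8]
  set y := eulerMascheroniConstant / 2
  have hexp_y : 1 + y + y ^ 2 / 2 + y ^ 3 / 6 ≤ exp y := by
    simpa [Finset.sum_range_succ, Nat.factorial] using sum_le_exp_of_nonneg (by linarith) 4
  have hpoly : 1.3342 < 1 + y + y ^ 2 / 2 + y ^ 3 / 6 := by nlinarith
  rw [exp_sub, div_lt_iff₀ (exp_pos y)]
  nlinarith [exp_one_lt_d9]

theorem logb_two_exp_one_sub_eulerMascheroniConstant_div_two_div_le :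
    logb 2 (exp (1 - eulerMascheroniConstant / 2) / √2 / 2) ≤ -0.473678 := by
  rw [logb, div_le_iff₀ (log_pos one_lt_two), log_div (by positivity) two_ne_zero,
    log_div (exp_pos _).ne' (by positivity), log_exp, log_sqrt zero_le_two]
  linarith [eulerMascheroniConstant_gt_d8, log_two_gt_d9]

theorem two_mul_sqrt_two_sub_four_div_exp_one_sub_eulerMascheroniConstant_div_two_lt :
    2 * √2 - 4 / exp (1 - eulerMascheroniConstant / 2) < 0.87 := by
  have hE := exp_one_sub_eulerMascheroniConstant_div_two_lt
  have hsqrt : √2 < 1.4142136 := (sqrt_lt' (by norm_num)).2 (by norm_num)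
  have : 1.95848 < 4 / exp (1 - eulerMascheroniConstant / 2) := by
    rw [lt_div_iff₀ (exp_pos _)]
    linarith
  linarith

theorem Rseq_diff_lt_numeric (n : ℕ) (hn : 2 ≤ n) :
    Rseq (Real.exp (1 - Real.eulerMascheroniConstant / 2) / Real.sqrt 2) (n + 1) -
        Rseq (Real.exp (1 - Real.eulerMascheroniConstant / 2) / Real.sqrt 2) n <
      0.87 / (n : ℝ) ^ (0.473678 : ℝ) := by
  set E := exp (1 - eulerMascheroniConstant / 2)
  have hsqrt : 0 < √2 := by positivity
  have hD₁ : 1 ≤ E / √2 :=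
    (one_le_div hsqrt).2 sqrt_two_le_exp_one_sub_eulerMascheroniConstant_div_two
  have hD₂ : E / √2 ≤ 2 := by
    have : 1.4142135 < √2 := (lt_sqrt (by norm_num)).2 (by norm_num)
    rw [div_le_iff₀ hsqrt]
    linarith [exp_one_sub_eulerMascheroniConstant_div_two_lt]
  have hK : 2 * √2 * (1 - 1 / (E / √2)) = 2 * √2 - 4 / E := by
    have hE : E ≠ 0 := (exp_pos _).ne'
    rw [one_div_div]
    field_simp
    linear_combination (-2 : ℝ) * sq_sqrt zero_le_two
  have hK₀ : 0 ≤ 2 * √2 - 4 / E :=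
    hK ▸ mul_nonneg (by positivity) (by rwa [sub_nonneg, div_le_one (by positivity)])
  have hn₁ : (1 : ℝ) ≤ n := by norm_cast; omega
  calc Rseq (E / √2) (n + 1) - Rseq (E / √2) n
      ≤ (2 * √2 - 4 / E) * (n : ℝ) ^ logb 2 (E / √2 / 2) := hK ▸ Rseq_succ_sub_le_rpow hD₁ hD₂ hn
    _ ≤ (2 * √2 - 4 / E) * (n : ℝ) ^ (-0.473678 : ℝ) := mul_le_mul_of_nonneg_left
        (rpow_le_rpow_of_exponent_le hn₁
          logb_two_exp_one_sub_eulerMascheroniConstant_div_two_div_le) hK₀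
    _ < 0.87 * (n : ℝ) ^ (-0.473678 : ℝ) := by
        gcongr
        exact two_mul_sqrt_two_sub_four_div_exp_one_sub_eulerMascheroniConstant_div_two_lt
    _ = 0.87 / (n : ℝ) ^ (0.473678 : ℝ) := by rw [rpow_neg (by positivity), div_eq_mul_inv]
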